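/- arXiv:1410.6186 — 2 statements merged into one kernel-verified Lean document; each statement's English description precedes it below -/
import Mathlib

section
/- With f^{(A)} = Σ_{k : 2α_k < A} (1/α_k) a_k where a_k = (M_{2α_k}/M)(D_{M_{2α_k+1}} − D_{M_{2α_k}}), the Vilenkin–Fourier coefficients of the martingale f are f̂(j) = M_{2α_k}/(M·α_k) if j ∈ {M_{2α_k}, ..., M_{2α_k+1} − 1} for some k, and f̂(j) = 0 if j lies outside the union of these blocks. -/
noncomputable section
open MeasureTheory Finset Filter
open scoped ENNReal NNReal

/-- M_0 = 1, M_{k+1} = m_k M_k, where the Vilenkin generating sequence is k ↦ m k + 2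
(ensuring every term is at least 2). -/
def Mv (m : ℕ → ℕ) : ℕ → ℕ
  | 0 => 1
  | k + 1 => (m k + 2) * Mv m k

/-- k-th digit of n in the generalized number system. -/
def digit (m : ℕ → ℕ) (n k : ℕ) : ℕ := (n / Mv m k) % (m k + 2)

/-- The Vilenkin group: complete direct product of the cyclic groups Z_{m_k + 2}. -/
abbrev GV (m : ℕ → ℕ) : Type := ∀ k : ℕ, ZMod (m k + 2)

instance (n : ℕ) : TopologicalSpace (ZMod (n + 2)) := ⊥
instance (n : ℕ) : DiscreteTopology (ZMod (n + 2)) := ⟨rfl⟩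

instance (n : ℕ) : MeasurableSpace (ZMod (n + 2)) := ⊤
instance (n : ℕ) : BorelSpace (ZMod (n + 2)) := ⟨(borel_eq_top_of_discrete).symm⟩

/-- The normalized Haar measure on the Vilenkin group. -/
def haarG (m : ℕ → ℕ) : Measure (GV m) :=
  Measure.addHaarMeasure (⊤ : TopologicalSpace.PositiveCompacts (GV m))

/-- Generalized Rademacher function r_k(x) = exp(2πi x_k / m_k). -/
def rad (m : ℕ → ℕ) (k : ℕ) (x : GV m) : ℂ :=
  Complex.exp (2 * Real.pi * Complex.I * ((x k).val : ℂ) / ((m k + 2 : ℕ) : ℂ))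

/-- Vilenkin character ψ_n(x) = ∏_k r_k(x)^{n_k}. -/
def vilenkin (m : ℕ → ℕ) (n : ℕ) (x : GV m) : ℂ :=
  ∏ k ∈ Finset.range n, rad m k x ^ digit m n k

/-- Dirichlet kernel D_n = ∑_{k<n} ψ_k. -/
def DK (m : ℕ → ℕ) (n : ℕ) (x : GV m) : ℂ :=
  ∑ k ∈ Finset.range n, vilenkin m k x

/-- Fejér kernel K_n = (1/n) ∑_{j=1}^n D_j. -/
def FK (m : ℕ → ℕ) (n : ℕ) (x : GV m) : ℂ :=
  (n : ℂ)⁻¹ * ∑ j ∈ Finset.range n, DK m (j + 1) x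

/-- The interval I_n = {x : x_0 = ⋯ = x_{n-1} = 0}. -/
def Iset (m : ℕ → ℕ) (n : ℕ) : Set (GV m) := {x | ∀ k < n, x k = 0}

/-- q_A = M_{2A} + M_{2A-2} + ⋯ + M_2 + M_0. -/
def qA (m : ℕ → ℕ) (A : ℕ) : ℕ := ∑ j ∈ Finset.range (A + 1), Mv m (2 * j)

/-- Fourier coefficient with respect to the Vilenkin system. -/
def fhat (m : ℕ → ℕ) (f : GV m → ℂ) (k : ℕ) : ℂ :=
  ∫ x, f x * (starRingEnd ℂ) (vilenkin m k x) ∂ haarG m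

/-- Partial sums from a given sequence of Fourier coefficients. -/
def Sc (m : ℕ → ℕ) (c : ℕ → ℂ) (n : ℕ) (x : GV m) : ℂ :=
  ∑ v ∈ Finset.range n, c v * vilenkin m v x

/-- Fejér means from a given sequence of Fourier coefficients. -/
def σc (m : ℕ → ℕ) (c : ℕ → ℂ) (n : ℕ) (x : GV m) : ℂ :=
  (n : ℂ)⁻¹ * ∑ k ∈ Finset.range n, Sc m c k x

/-- Partial sum operator S_n f for integrable f. -/
def Spart (m : ℕ → ℕ) (f : GV m → ℂ) (n : ℕ) (x : GV m) : ℂ :=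
  Sc m (fhat m f) n x

/-- The filtration generated by the intervals I_n(x), i.e. by the first n coordinates. -/
def filtrationG (m : ℕ → ℕ) : Filtration ℕ (inferInstance : MeasurableSpace (GV m)) where
  seq n := MeasurableSpace.comap (fun x (k : Fin n) => x k) inferInstance
  mono' := by
    intro a b hab
    show MeasurableSpace.comap (fun (x : GV m) (k : Fin a) => x k) inferInstance ≤
      MeasurableSpace.comap (fun (x : GV m) (k : Fin b) => x k) inferInstance
    have : (fun (x : GV m) (k : Fin a) => x k) =
        (fun (y : ∀ k : Fin b, ZMod (m k + 2)) (k : Fin a) => y (Fin.castLE hab k)) ∘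
          (fun x (k : Fin b) => x k) := rfl
    rw [this, ← MeasurableSpace.comap_comp]
    exact MeasurableSpace.comap_mono
      ((measurable_pi_lambda _ fun k => measurable_pi_apply _).comap_le)
  le' := fun n => (measurable_pi_lambda _ fun k => measurable_pi_apply _).comap_le


/-- The atom a = (M_{2β}/M)(D_{M_{2β+1}} - D_{M_{2β}}). -/
def aAtom (m : ℕ → ℕ) (M : ℕ) (β : ℕ) (x : GV m) : ℂ :=
  ((Mv m (2 * β) : ℂ) / (M : ℂ)) * (DK m (Mv m (2 * β + 1)) x - DK m (Mv m (2 * β)) x)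

/-- The martingale f^{(A)} = ∑_{k : 2α_k < A} (1/α_k) a_k. -/
def fSeq (m : ℕ → ℕ) (M : ℕ) (α : ℕ → ℕ) (A : ℕ) (x : GV m) : ℂ :=
  ∑ k ∈ (Finset.range A).filter (fun k => 2 * α k < A), ((α k : ℂ))⁻¹ * aAtom m M (α k) x

-- The Fourier coefficients of the constructed martingale: M_{2α_k}/(M α_k) on the
-- block [M_{2α_k}, M_{2α_k+1}) and 0 outside all blocks.
open scoped Classical in
def coef (m : ℕ → ℕ) (M : ℕ) (α : ℕ → ℕ) (j : ℕ) : ℂ :=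
  if h : ∃ k, Mv m (2 * α k) ≤ j ∧ j < Mv m (2 * α k + 1) then
    (Mv m (2 * α h.choose) : ℂ) / ((M : ℂ) * (α h.choose : ℂ))
  else 0

/-! The Vilenkin functions are characters of the compact group `G_m`: `ψ_n = ∏_k r_k ^ n_k` with
each `r_k` a character, and distinct `n` give distinct characters because `n` is determined by
its digits. Translation invariance of Haar measure kills the integral of a nontrivial character,
so the `ψ_n` are orthonormal. The atom `a_β` is `M_{2β}/M` times the sum of the `ψ_v` over the
block `[M_{2β}, M_{2β+1})`, and for distinct `β` these blocks are disjoint. Hence `∫ f^{(A)} ψ̄_j`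
picks up at most one atom, namely the one whose block contains `j`, and it is constant as soon as
that atom has entered `f^{(A)}`. -/

section Orthogonality

variable {G : Type*} [MeasurableSpace G] (μ : Measure G)

theorem AddChar.integral_eq_zero_of_ne_one [AddGroup G] [MeasurableAdd G]
    [μ.IsAddRightInvariant] {ψ : AddChar G Circle} (hψ : ψ ≠ 1) :
    ∫ x, (ψ x : ℂ) ∂μ = 0 := by
  obtain ⟨g, hg⟩ := AddChar.ne_one_iff.mp hψ
  have hg' : (ψ g : ℂ) ≠ 1 := by rwa [Ne, Circle.coe_eq_one]
  have htranslate : ∫ x, (ψ x : ℂ) ∂μ = (∫ x, (ψ x : ℂ) ∂μ) * ψ g := by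
    conv_lhs => rw [← integral_add_right_eq_self _ g]
    simp only [AddChar.map_add_eq_mul, Circle.coe_mul]
    exact integral_mul_const _ _
  have : (∫ x, (ψ x : ℂ) ∂μ) * (1 - ψ g) = 0 := by linear_combination htranslate
  exact (mul_eq_zero.mp this).resolve_right (sub_ne_zero.mpr hg'.symm)

theorem AddChar.integral_mul_conj [AddCommGroup G] [MeasurableAdd G] [μ.IsAddRightInvariant]
    [IsProbabilityMeasure μ] (ψ χ : AddChar G Circle) :
    ∫ x, (ψ x : ℂ) * starRingEnd ℂ (χ x) ∂μ = if ψ = χ then 1 else 0 := by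
  have hdiv : ∀ x, (ψ x : ℂ) * starRingEnd ℂ (χ x) = ((ψ / χ) x : ℂ) := fun x => by
    rw [AddChar.div_apply, AddChar.map_neg_eq_inv, Circle.coe_mul, Circle.coe_inv_eq_conj]
  simp_rw [hdiv]
  split_ifs with h
  · simp [h]
  · exact AddChar.integral_eq_zero_of_ne_one μ (div_ne_one.mpr h)

end Orthogonality

namespace Vilenkin

variable {m : ℕ → ℕ}

theorem Mv_succ (m : ℕ → ℕ) (k : ℕ) : Mv m (k + 1) = (m k + 2) * Mv m k := rfl

theorem monotone_Mv (m : ℕ → ℕ) : Monotone (Mv m) :=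
  monotone_nat_of_le_succ fun k => Nat.le_mul_of_pos_left _ (by omega)

theorem lt_Mv_self (m : ℕ → ℕ) (k : ℕ) : k < Mv m k := by
  induction k with
  | zero => simp [Mv]
  | succ k ih => rw [Mv_succ]; nlinarith

theorem digit_lt (m : ℕ → ℕ) (n k : ℕ) : digit m n k < m k + 2 := Nat.mod_lt _ (by omega)

theorem digit_eq_zero_of_le {n k : ℕ} (h : n ≤ k) : digit m n k = 0 := by
  rw [digit, Nat.div_eq_of_lt (h.trans_lt (lt_Mv_self m k)), Nat.zero_mod]

theorem mod_Mv_eq_of_digit_eq {v j : ℕ} (h : ∀ k, digit m v k = digit m j k) (k : ℕ) :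
    v % Mv m k = j % Mv m k := by
  induction k with
  | zero => rw [Mv, Nat.mod_one, Nat.mod_one]
  | succ k ih => rw [Mv_succ, mul_comm, Nat.mod_mul, Nat.mod_mul, ih, ← digit, ← digit, h]

theorem eq_of_digit_eq {v j : ℕ} (h : ∀ k, digit m v k = digit m j k) : v = j := by
  have hv := Nat.mod_eq_of_lt ((lt_Mv_self m (v + j)).trans_le' (by omega : v ≤ v + j))
  have hj := Nat.mod_eq_of_lt ((lt_Mv_self m (v + j)).trans_le' (by omega : j ≤ v + j))
  calc v = v % Mv m (v + j) := hv.symm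
    _ = j % Mv m (v + j) := mod_Mv_eq_of_digit_eq h _
    _ = j := hj

def vilenkinChar (m : ℕ → ℕ) (n : ℕ) : AddChar (GV m) Circle :=
  ∏ k ∈ range n,
    (ZMod.toCircle.compAddMonoidHom (Pi.evalAddMonoidHom (fun i => ZMod (m i + 2)) k)) ^
      digit m n k

theorem vilenkinChar_apply (n : ℕ) (x : GV m) :
    vilenkinChar m n x = ∏ k ∈ range n, ZMod.toCircle (x k) ^ digit m n k := by
  simp only [vilenkinChar, AddChar.prod_apply, AddChar.pow_apply]
  rfl

theorem coe_vilenkinChar (n : ℕ) (x : GV m) : (vilenkinChar m n x : ℂ) = vilenkin m n x := by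
  rw [vilenkinChar_apply, vilenkin]
  refine (map_prod Circle.coeHom _ _).trans (prod_congr rfl fun k _ => ?_)
  change ((ZMod.toCircle (x k) : Circle) : ℂ) ^ _ = _
  rw [ZMod.toCircle_apply, rad]

theorem vilenkinChar_single (n k : ℕ) :
    vilenkinChar m n (Pi.single k 1) = ZMod.toCircle (digit m n k : ZMod (m k + 2)) := by
  rw [vilenkinChar_apply, prod_eq_single k]
  · simp [← AddChar.map_nsmul_eq_pow]
  · intro i _ hik
    rw [Pi.single_eq_of_ne hik, AddChar.map_zero_eq_one, one_pow]
  · intro hk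
    simp [digit_eq_zero_of_le (not_lt.mp (mem_range.not.mp hk))]

theorem vilenkinChar_injective : Function.Injective (vilenkinChar m) := by
  intro v j hvj
  refine eq_of_digit_eq (m := m) fun k => ?_
  have hsingle := congrArg (· (Pi.single k 1)) hvj
  simp only [vilenkinChar_single] at hsingle
  have := ZMod.injective_toCircle hsingle
  rwa [ZMod.natCast_eq_natCast_iff', Nat.mod_eq_of_lt (digit_lt m v k),
    Nat.mod_eq_of_lt (digit_lt m j k)] at this

instance : IsProbabilityMeasure (haarG m) :=
  ⟨by simpa [haarG] using Measure.addHaarMeasure_self (G := GV m) (K₀ := ⊤)⟩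

instance : (haarG m).IsAddRightInvariant := by
  unfold haarG; infer_instance

theorem integral_vilenkin_mul_conj (v j : ℕ) :
    ∫ x, vilenkin m v x * starRingEnd ℂ (vilenkin m j x) ∂haarG m = if v = j then 1 else 0 := by
  have := AddChar.integral_mul_conj (haarG m) (vilenkinChar m v) (vilenkinChar m j)
  simpa only [coe_vilenkinChar, vilenkinChar_injective.eq_iff] using this

theorem continuous_vilenkin (n : ℕ) : Continuous (vilenkin m n) :=
  continuous_finsetProd _ fun k _ =>
    ((continuous_of_discreteTopology (f := fun z : ZMod (m k + 2) =>
      Complex.exp (2 * Real.pi * Complex.I * (z.val : ℂ) / ((m k + 2 : ℕ) : ℂ)))).comp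
        (continuous_apply k)).pow _

theorem integrable_vilenkin_mul_conj (v j : ℕ) :
    Integrable (fun x => vilenkin m v x * starRingEnd ℂ (vilenkin m j x)) (haarG m) :=
  ((continuous_vilenkin v).mul (Complex.continuous_conj.comp (continuous_vilenkin j)))
    |>.integrable_of_hasCompactSupport (HasCompactSupport.of_compactSpace _)

theorem integrable_sum_vilenkin_mul_conj (s : Finset ℕ) (c : ℕ → ℂ) (j : ℕ) :
    Integrable (fun x => (∑ v ∈ s, c v * vilenkin m v x) * starRingEnd ℂ (vilenkin m j x))
      (haarG m) := by
  simp_rw [sum_mul, mul_assoc]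
  exact integrable_finsetSum _ fun v _ => (integrable_vilenkin_mul_conj v j).const_mul _

theorem integral_sum_vilenkin_mul_conj (s : Finset ℕ) (c : ℕ → ℂ) (j : ℕ) :
    ∫ x, (∑ v ∈ s, c v * vilenkin m v x) * starRingEnd ℂ (vilenkin m j x) ∂haarG m =
      if j ∈ s then c j else 0 := by
  simp_rw [sum_mul, mul_assoc]
  rw [integral_finsetSum _ fun v _ => (integrable_vilenkin_mul_conj v j).const_mul _]
  simp_rw [integral_const_mul, integral_vilenkin_mul_conj, mul_ite, mul_one, mul_zero]
  exact sum_ite_eq' s j c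

def block (m : ℕ → ℕ) (β : ℕ) : Finset ℕ := Ico (Mv m (2 * β)) (Mv m (2 * β + 1))

theorem mem_block {β j : ℕ} : j ∈ block m β ↔ Mv m (2 * β) ≤ j ∧ j < Mv m (2 * β + 1) :=
  mem_Ico

theorem disjoint_block {β γ : ℕ} (h : β < γ) : Disjoint (block m β) (block m γ) :=
  Ico_disjoint_Ico_consecutive _ _ _ |>.mono_right
    (Ico_subset_Ico_left (monotone_Mv m (by omega)))

theorem eq_of_mem_block {α : ℕ → ℕ} (hα : Function.Injective α) {j k i : ℕ}
    (hk : j ∈ block m (α k)) (hi : j ∈ block m (α i)) : i = k := by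
  by_contra hik
  rcases lt_or_gt_of_ne (hα.ne hik) with h | h
  · exact disjoint_left.mp (disjoint_block h) hi hk
  · exact disjoint_left.mp (disjoint_block h) hk hi

theorem aAtom_eq_sum (M β : ℕ) (x : GV m) :
    aAtom m M β x = ∑ v ∈ block m β, (Mv m (2 * β) / M : ℂ) * vilenkin m v x := by
  rw [aAtom, block, DK, DK, ← sum_Ico_eq_sub _ (monotone_Mv m (Nat.le_succ _)), mul_sum]

theorem integral_fSeq_mul_conj (M : ℕ) (α : ℕ → ℕ) (A j : ℕ) :
    ∫ x, fSeq m M α A x * starRingEnd ℂ (vilenkin m j x) ∂haarG m =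
      ∑ k ∈ (range A).filter (fun k => 2 * α k < A),
        if j ∈ block m (α k) then (α k : ℂ)⁻¹ * (Mv m (2 * α k) / M) else 0 := by
  simp_rw [fSeq, sum_mul, mul_assoc, aAtom_eq_sum]
  rw [integral_finsetSum _ fun k _ =>
    (integrable_sum_vilenkin_mul_conj (block m (α k)) _ j).const_mul _]
  simp_rw [integral_const_mul, integral_sum_vilenkin_mul_conj, mul_ite, mul_zero]

theorem coef_eq_of_mem_block {M : ℕ} {α : ℕ → ℕ} (hα : Function.Injective α) {j k : ℕ}
    (hk : j ∈ block m (α k)) : coef m M α j = (α k : ℂ)⁻¹ * (Mv m (2 * α k) / M) := by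
  have hex : ∃ k, Mv m (2 * α k) ≤ j ∧ j < Mv m (2 * α k + 1) := ⟨k, mem_block.mp hk⟩
  rw [coef, dif_pos hex, eq_of_mem_block hα hk (mem_block.mpr hex.choose_spec)]
  ring

theorem coef_eq_zero {M : ℕ} {α : ℕ → ℕ} {j : ℕ} (h : ∀ k, j ∉ block m (α k)) :
    coef m M α j = 0 :=
  dif_neg fun ⟨k, hk⟩ => h k (mem_block.mpr hk)

end Vilenkin

open Vilenkin in
theorem fourier_coefficients_of_f_general (m : ℕ → ℕ) (M : ℕ) (α : ℕ → ℕ)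
    (hα : StrictMono α) (j : ℕ) :
    Filter.Tendsto
      (fun A => ∫ x, fSeq m M α A x * (starRingEnd ℂ) (vilenkin m j x) ∂ haarG m)
      Filter.atTop (nhds (coef m M α j)) := by
  simp_rw [integral_fSeq_mul_conj]
  by_cases hj : ∃ k, j ∈ block m (α k)
  · obtain ⟨k, hk⟩ := hj
    rw [coef_eq_of_mem_block hα.injective hk]
    refine tendsto_const_nhds.congr' ?_
    filter_upwards [eventually_gt_atTop (k + 2 * α k)] with A hA
    rw [sum_eq_single_of_mem k (by simp only [mem_filter, mem_range]; omega)
      fun i _ hik => if_neg (hik ∘ eq_of_mem_block hα.injective hk), if_pos hk]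
  · have hj' := not_exists.mp hj
    simp [coef_eq_zero hj', hj']

/-- The Vilenkin–Fourier coefficients of the martingale f: for every j, the limit
lim_A ∫ f^{(A)} ψ̄_j dμ exists and equals M_{2α_k}/(M α_k) on the block
[M_{2α_k}, M_{2α_k+1}) and 0 outside all blocks. -/
theorem fourier_coefficients_of_f (m : ℕ → ℕ) (M : ℕ) (α : ℕ → ℕ)
    (hα : StrictMono α) (hα0 : 0 < α 0)
    (hM : ∀ k, m k + 2 ≤ M) (hM' : ∃ k, m k + 2 = M) (j : ℕ) :
    Filter.Tendsto
      (fun A => ∫ x, fSeq m M α A x * (starRingEnd ℂ) (vilenkin m j x) ∂ haarG m)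
      Filter.atTop (nhds (coef m M α j)) :=
  fourier_coefficients_of_f_general m M α hα j

end
end

section
/- There exists an increasing sequence {α_k} of positive integers such that (i) Σ_k α_k^{-1/2} < ∞, (ii) Σ_{η=0}^{k-1} (M_{2α_η})²/α_η < (M_{2α_k})²/α_k for every k ≥ 1, and (iii) 32 M (M_{2α_{k-1}})²/α_{k-1} < M_{α_k}/α_k for every k ≥ 1. -/
noncomputable section
open MeasureTheory Finset Filter
open scoped ENNReal NNReal

lemma Mv_pos' (m : ℕ → ℕ) (n : ℕ) : 0 < Mv m n := by
  induction n with
  | zero => simp [Mv]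
  | succ k ih =>
    show 0 < (m k + 2) * Mv m k
    exact Nat.mul_pos (by omega) ih

lemma Mv_mono' (m : ℕ → ℕ) : Monotone (Mv m) := by
  apply monotone_nat_of_le_succ
  intro n
  show Mv m n ≤ (m n + 2) * Mv m n
  exact Nat.le_mul_of_pos_left _ (by omega)

lemma two_pow_le_Mv' (m : ℕ → ℕ) (n : ℕ) : 2 ^ n ≤ Mv m n := by
  induction n with
  | zero => simp [Mv]
  | succ k ih =>
    calc 2 ^ (k + 1) = 2 * 2 ^ k := by ring
      _ ≤ (m k + 2) * Mv m k := Nat.mul_le_mul (by omega) ih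
      _ = Mv m (k + 1) := rfl

lemma sq_le_two_pow' (n : ℕ) (hn : 4 ≤ n) : n ^ 2 ≤ 2 ^ n := by
  induction n with
  | zero => omega
  | succ k ih =>
    rcases Nat.lt_or_ge k 4 with h | h
    · have hk3 : k = 3 := by omega
      subst hk3; norm_num
    · have hk := ih h
      have h2 : 2 * k + 1 ≤ k ^ 2 := by nlinarith
      calc (k + 1) ^ 2 = k ^ 2 + (2 * k + 1) := by ring
        _ ≤ 2 ^ k + k ^ 2 := by omega
        _ ≤ 2 ^ k + 2 ^ k := by omega
        _ = 2 ^ (k + 1) := by ring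

lemma exists_big' (m : ℕ → ℕ) (C : ℝ) (a : ℕ) :
    ∃ n : ℕ, 4 * (a + 1) ≤ n ∧ C < (Mv m n : ℝ) / n := by
  refine ⟨max (4 * (a + 1)) (max 4 (⌈C⌉₊ + 1)), le_max_left _ _, ?_⟩
  set n := max (4 * (a + 1)) (max 4 (⌈C⌉₊ + 1)) with hn
  have h4 : 4 ≤ n := le_trans (le_max_left _ _) (le_max_right _ _)
  have hC : ⌈C⌉₊ + 1 ≤ n := le_trans (le_max_right _ _) (le_max_right _ _)
  have hn0 : (0 : ℝ) < n := by exact_mod_cast Nat.lt_of_lt_of_le (by norm_num) h4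
  have h1 : (n : ℝ) ^ 2 ≤ (Mv m n : ℝ) := by
    exact_mod_cast le_trans (sq_le_two_pow' n h4) (two_pow_le_Mv' m n)
  have h2 : (n : ℝ) ≤ (Mv m n : ℝ) / n := by
    rw [le_div_iff₀ hn0]; nlinarith
  have h3 : C < (n : ℝ) := by
    calc C ≤ (⌈C⌉₊ : ℝ) := Nat.le_ceil C
      _ < ((⌈C⌉₊ + 1 : ℕ) : ℝ) := by exact_mod_cast Nat.lt_succ_self _
      _ ≤ (n : ℝ) := by exact_mod_cast hC
  linarith

/-- There exists an increasing sequence α of positive integers satisfying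
conditions (2), (3) and (4) of the construction. -/
theorem exists_alpha (m : ℕ → ℕ) (M : ℕ)
    (hM : ∀ k, m k + 2 ≤ M) (hM' : ∃ k, m k + 2 = M) :
    ∃ α : ℕ → ℕ, StrictMono α ∧ (∀ k, 0 < α k) ∧
      (Summable fun k => ((α k : ℝ)) ^ (-(2 : ℝ)⁻¹)) ∧
      (∀ k, 1 ≤ k →
        ∑ η ∈ Finset.range k, ((Mv m (2 * α η) : ℝ)) ^ 2 / (α η : ℝ) <
          ((Mv m (2 * α k) : ℝ)) ^ 2 / (α k : ℝ)) ∧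
      (∀ k, 1 ≤ k →
        32 * (M : ℝ) * ((Mv m (2 * α (k - 1)) : ℝ)) ^ 2 / (α (k - 1) : ℝ) <
          (Mv m (α k) : ℝ) / (α k : ℝ)) := by
  choose g hg1 hg2 using exists_big' m
  set T : ℕ → ℝ := fun p => ((Mv m (2 * p) : ℝ)) ^ 2 / (p : ℝ) with hT
  set α : ℕ → ℕ :=
    fun k => Nat.rec 1 (fun _ p => g (max (32 * (M : ℝ) * T p) (2 * T p)) p) k with hα
  have hα0 : α 0 = 1 := rfl
  have hαs : ∀ k, α (k + 1) = g (max (32 * (M : ℝ) * T (α k)) (2 * T (α k))) (α k) :=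
    fun _ => rfl
  have hpos : ∀ k, 0 < α k := by
    intro k
    cases k with
    | zero => simp [hα0]
    | succ j =>
      rw [hαs]
      have := hg1 (max (32 * (M : ℝ) * T (α j)) (2 * T (α j))) (α j)
      omega
  have hlt : ∀ k, α k < α (k + 1) := by
    intro k
    rw [hαs]
    have := hg1 (max (32 * (M : ℝ) * T (α k)) (2 * T (α k))) (α k)
    omega
  have hmono : StrictMono α := strictMono_nat_of_lt_succ hlt
  have hgrow : ∀ k, 4 ^ k ≤ α k := by
    intro k
    induction k with
    | zero => simp [hα0]
    | succ j ih =>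
      rw [hαs]
      have := hg1 (max (32 * (M : ℝ) * T (α j)) (2 * T (α j))) (α j)
      calc 4 ^ (j + 1) = 4 * 4 ^ j := by ring
        _ ≤ 4 * α j := by omega
        _ ≤ 4 * (α j + 1) := by omega
        _ ≤ _ := this
  have hTpos : ∀ k, 0 < T (α k) := by
    intro k
    apply div_pos
    · have := Mv_pos' m (2 * α k)
      positivity
    · exact_mod_cast hpos k
  have hmax : ∀ k, max (32 * (M : ℝ) * T (α k)) (2 * T (α k)) <
      (Mv m (α (k + 1)) : ℝ) / (α (k + 1)) := by
    intro k
    rw [hαs k]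
    exact hg2 _ (α k)
  have hbig : ∀ k, (Mv m (α k) : ℝ) / (α k) ≤ T (α k) := by
    intro k
    have h1 : Mv m (α k) ≤ Mv m (2 * α k) := Mv_mono' m (by omega)
    have h2 : 1 ≤ Mv m (2 * α k) := Mv_pos' m _
    have h3 : (Mv m (α k) : ℝ) ≤ ((Mv m (2 * α k) : ℝ)) ^ 2 := by
      have : Mv m (α k) ≤ Mv m (2 * α k) ^ 2 := by nlinarith
      exact_mod_cast this
    have h0 : (0 : ℝ) < (α k : ℝ) := by exact_mod_cast hpos k
    exact div_le_div_of_nonneg_right h3 h0.le |>.trans_eq rfl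
  have hstep : ∀ k, max (32 * (M : ℝ) * T (α k)) (2 * T (α k)) < T (α (k + 1)) :=
    fun k => lt_of_lt_of_le (hmax k) (hbig (k + 1))
  have hsum : ∀ j, ∑ η ∈ Finset.range (j + 1), T (α η) < T (α (j + 1)) := by
    intro j
    induction j with
    | zero =>
      rw [Finset.sum_range_one]
      have h0 := hTpos 0
      calc T (α 0) < 2 * T (α 0) := by linarith
        _ ≤ max (32 * (M : ℝ) * T (α 0)) (2 * T (α 0)) := le_max_right _ _
        _ < T (α 1) := hstep 0
    | succ i ih =>
      rw [Finset.sum_range_succ]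
      calc ∑ η ∈ Finset.range (i + 1), T (α η) + T (α (i + 1)) <
          T (α (i + 1)) + T (α (i + 1)) := by linarith
        _ = 2 * T (α (i + 1)) := by ring
        _ ≤ max (32 * (M : ℝ) * T (α (i + 1))) (2 * T (α (i + 1))) := le_max_right _ _
        _ < T (α (i + 2)) := hstep (i + 1)
  refine ⟨α, hmono, hpos, ?_, ?_, ?_⟩
  · have hb : Summable fun k : ℕ => ((2 : ℝ)⁻¹) ^ k :=
      summable_geometric_of_lt_one (by norm_num) (by norm_num)
    refine Summable.of_nonneg_of_le (fun k => Real.rpow_nonneg (Nat.cast_nonneg _) _)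
      (fun k => ?_) hb
    have h4 : ((4 : ℝ) ^ k) ≤ (α k : ℝ) := by exact_mod_cast hgrow k
    have e1 : ((α k : ℝ)) ^ (-(2 : ℝ)⁻¹) = (((α k : ℝ)) ^ ((2 : ℝ)⁻¹))⁻¹ :=
      Real.rpow_neg (Nat.cast_nonneg _) _
    have e2 : ((4 : ℝ) ^ k) ^ ((2 : ℝ)⁻¹) = 2 ^ k := by
      have h44 : ((4 : ℝ) ^ k) = ((2 : ℝ) ^ k) ^ (2 : ℕ) := by
        rw [← pow_mul, mul_comm k 2, pow_mul]; norm_num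
      rw [h44, ← Real.rpow_natCast ((2 : ℝ) ^ k) 2, ← Real.rpow_mul (by positivity)]
      norm_num
    have h5 : (2 : ℝ) ^ k ≤ ((α k : ℝ)) ^ ((2 : ℝ)⁻¹) := by
      rw [← e2]
      exact Real.rpow_le_rpow (by positivity) h4 (by norm_num)
    rw [e1]
    calc (((α k : ℝ)) ^ ((2 : ℝ)⁻¹))⁻¹ ≤ ((2 : ℝ) ^ k)⁻¹ :=
        inv_anti₀ (by positivity) h5
      _ = ((2 : ℝ)⁻¹) ^ k := by rw [inv_pow]
  · intro k hk
    rcases k with _ | j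
    · omega
    · simpa only [hT] using hsum j
  · intro k hk
    rcases k with _ | j
    · omega
    · simp only [Nat.add_sub_cancel]
      have heq : 32 * (M : ℝ) * ((Mv m (2 * α j) : ℝ)) ^ 2 / (α j : ℝ) =
          32 * (M : ℝ) * T (α j) := by
        simp only [hT]; ring
      rw [heq]
      exact lt_of_le_of_lt (le_max_left _ _) (hmax j)

end
end
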